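/- Let κ > 0 be a constant and define A(ξ',λ) = (|ξ'|² + κ⁻¹(λ+1))^{1/2} for ξ' ∈ ℝ^{n−1}\{0} and λ = λ₁ + iλ₂ ∈ ℂ with λ₁ ≥ 0, λ₂ ≠ 0. Then for every s ∈ ℝ and every multi-index α' ≥ 0 in ℤ^{n−1} there are constants C = C(κ,s,α') > 0 and d = d(κ) > 0 such that, for all such (ξ',λ) and all x_n ≥ 0: (i) |∂^{α'}_{ξ'} A(ξ',λ)^s| ≤ C (|ξ'| + |λ|^{1/2} + 1)^{s−|α'|}; (ii) |∂^{α'}_{ξ'} |ξ'|^s| ≤ C(s,α') |ξ'|^{s−|α'|}; (iii) |∂^{α'}_{ξ'} e^{−A(ξ',λ) x_n}| ≤ C (|ξ'| + |λ|^{1/2} + 1)^{−|α'|} e^{−d(|ξ'| + |λ|^{1/2} + 1) x_n}. -/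

import Mathlib

open MeasureTheory Set Filter
open scoped ENNReal Topology

noncomputable section

abbrev Euc (n : ℕ) := EuclideanSpace ℝ (Fin n)

variable {n : ℕ} {F : Type*} [NormedAddCommGroup F] [NormedSpace ℝ F]

/-- Partial derivative in the `i`-th coordinate direction. -/
def pd (i : Fin n) (u : Euc n → F) (x : Euc n) : F :=
  fderiv ℝ u x (EuclideanSpace.single i (1 : ℝ))

/-- `div (κ ∇ u)`, computed in coordinates as `∑ i ∂_i (κ ∂_i u)`. -/
def divKGrad (κ : Euc n → ℝ) (u : Euc n → F) (x : Euc n) : F :=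
  ∑ i, pd i (fun y => κ y • pd i u y) x

/-- Directional derivative `∂_ν u` along a vector field `ν`. -/
def normalD (ν : Euc n → Euc n) (u : Euc n → F) (x : Euc n) : F :=
  ∑ i, ν x i • pd i u x

/-- Time derivative `∂_t u`. -/
def timeDeriv (u : ℝ → Euc n → F) : ℝ → Euc n → F :=
  fun t x => deriv (fun s => u s x) t

/-- The `L_p(G)` norm (`p` a real exponent). -/
def lpNormOn (G : Set (Euc n)) (p : ℝ) (f : Euc n → F) : ℝ :=
  (eLpNorm f (ENNReal.ofReal p) (volume.restrict G)).toReal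

/-- Membership in `L_p(G)`. -/
def MemLpOn (G : Set (Euc n)) (p : ℝ) (f : Euc n → F) : Prop :=
  MemLp f (ENNReal.ofReal p) (volume.restrict G)

/-- The Sobolev `W^k_p(G)` norm, via iterated (total) derivatives. -/
def sobolevNorm (k : ℕ) (p : ℝ) (G : Set (Euc n)) (f : Euc n → F) : ℝ :=
  ∑ i ∈ Finset.range (k + 1), lpNormOn G p (fun x => (‖iteratedFDeriv ℝ i f x‖ : ℝ))

/-- Membership in the Sobolev space `W^k_p(G)`. -/
def MemSobolev (k : ℕ) (p : ℝ) (G : Set (Euc n)) (f : Euc n → F) : Prop :=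
  ∀ i ≤ k, MemLpOn G p (fun x => (‖iteratedFDeriv ℝ i f x‖ : ℝ))

/-- The `L_q(I)` norm of a scalar function of time. -/
def lqNormOn (I : Set ℝ) (q : ℝ) (φ : ℝ → ℝ) : ℝ :=
  (eLpNorm φ (ENNReal.ofReal q) (volume.restrict I)).toReal

/-- Membership in `L_q(I)` for a scalar function of time. -/
def MemLqOn (I : Set ℝ) (q : ℝ) (φ : ℝ → ℝ) : Prop :=
  MemLp φ (ENNReal.ofReal q) (volume.restrict I)

/-- The `L_q(I; W^k_p(G))` norm. -/
def lqSobNorm (I : Set ℝ) (q : ℝ) (k : ℕ) (p : ℝ) (G : Set (Euc n))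
    (u : ℝ → Euc n → F) : ℝ :=
  lqNormOn I q (fun t => sobolevNorm k p G (u t))

/-- The anisotropic Sobolev norm `‖u‖_{W^{2,1}_{p,q}(G×I)}`. -/
def anisoNorm (p q : ℝ) (G : Set (Euc n)) (I : Set ℝ) (u : ℝ → Euc n → F) : ℝ :=
  lqSobNorm I q 2 p G u + lqSobNorm I q 0 p G u + lqSobNorm I q 0 p G (timeDeriv u)

/-- Membership in the anisotropic Sobolev space `W^{2,1}_{p,q}(G×I)`. -/
def MemAniso (p q : ℝ) (G : Set (Euc n)) (I : Set ℝ) (u : ℝ → Euc n → F) : Prop :=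
  MemLqOn I q (fun t => sobolevNorm 2 p G (u t)) ∧
  MemLqOn I q (fun t => sobolevNorm 0 p G (u t)) ∧
  MemLqOn I q (fun t => sobolevNorm 0 p G (timeDeriv u t)) ∧
  (∀ᵐ t ∂(volume.restrict I), MemSobolev 2 p G (u t)) ∧
  (∀ᵐ t ∂(volume.restrict I), ∀ᵐ x ∂(volume : Measure (Euc n)),
    DifferentiableAt ℝ (fun s => u s x) t)

/-- Membership in `W^{2,1}_{p,q,0}(G×ℝ₊)`:
anisotropic regularity on all of `ℝ` together with vanishing for `t < 0`. -/
def MemAnisoZero (p q : ℝ) (G : Set (Euc n)) (u : ℝ → Euc n → ℝ) : Prop :=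
  MemAniso p q G univ u ∧ ∀ t < (0 : ℝ), ∀ x, u t x = 0

/-- One-dimensional Fourier transform (for complex-valued functions of time). -/
def ft1 (v : ℝ → ℂ) (ξ : ℝ) : ℂ :=
  ∫ t : ℝ, Complex.exp (-(2 * Real.pi * Complex.I) * (t : ℂ) * (ξ : ℂ)) * v t

/-- One-dimensional inverse Fourier transform. -/
def ift1 (v : ℝ → ℂ) (t : ℝ) : ℂ :=
  ∫ ξ : ℝ, Complex.exp ((2 * Real.pi * Complex.I) * (t : ℂ) * (ξ : ℂ)) * v ξ

/-- The Bessel-potential operator `⟨d_t⟩^s`, applied pointwise in the space variable: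
`⟨d_t⟩^s u = F⁻¹[(1+λ₂²)^{s/2} F u]`. -/
def besselDerivFn (s : ℝ) (u : ℝ → Euc n → ℝ) : ℝ → Euc n → ℝ :=
  fun t x =>
    (ift1 (fun ξ => ((((1 + ξ ^ 2) ^ (s / 2) : ℝ)) : ℂ) *
      ft1 (fun τ => ((u τ x : ℝ) : ℂ)) ξ) t).re

/-- The norm of `H^{1,1/2}_{p,q}(G×ℝ) = L_q(ℝ;W¹_p(G)) ∩ H^{1/2}_q(ℝ;L_p(G))`. -/
def hOneHalfNorm (p q : ℝ) (G : Set (Euc n)) (g : ℝ → Euc n → ℝ) : ℝ :=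
  lqSobNorm univ q 1 p G g + lqSobNorm univ q 0 p G (besselDerivFn (1 / 2) g)

/-- Membership in `H^{1,1/2}_{p,q}(G×ℝ)`. -/
def MemHOneHalf (p q : ℝ) (G : Set (Euc n)) (g : ℝ → Euc n → ℝ) : Prop :=
  MemLqOn univ q (fun t => sobolevNorm 1 p G (g t)) ∧
  MemLqOn univ q (fun t => sobolevNorm 0 p G (besselDerivFn (1 / 2) g t)) ∧
  (∀ᵐ t ∂(volume : Measure ℝ), MemSobolev 1 p G (g t))

/-- Membership in `H^{1,1/2}_{p,q,0}(G×ℝ₊)` (vanishing for `t<0`). -/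
def MemHOneHalfZero (p q : ℝ) (G : Set (Euc n)) (g : ℝ → Euc n → ℝ) : Prop :=
  MemHOneHalf p q G g ∧ ∀ t < (0 : ℝ), ∀ x, g t x = 0

/-- Membership in `H^{1,1/2}_{p,q,0}(G×(0,T))`: restriction of a member of the
`0`-space on `G×ℝ₊`. -/
def MemHOneHalfZeroOn (p q T : ℝ) (G : Set (Euc n)) (g : ℝ → Euc n → ℝ) : Prop :=
  ∃ g' : ℝ → Euc n → ℝ, MemHOneHalfZero p q G g' ∧ ∀ t ∈ Ioo (0 : ℝ) T, ∀ x, g' t x = g t x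

/-- The (infimum) norm of `H^{1,1/2}_{p,q,0}(G×(0,T))`. -/
def hRestrNorm (p q T : ℝ) (G : Set (Euc n)) (g : ℝ → Euc n → ℝ) : ℝ :=
  sInf {c : ℝ | ∃ g' : ℝ → Euc n → ℝ, MemHOneHalfZero p q G g' ∧
    (∀ t ∈ Ioo (0 : ℝ) T, ∀ x, g' t x = g t x) ∧ c = hOneHalfNorm p q G g'}

/-- `Ω` has a `C^k` boundary: locally, `Ω` is the sublevel set of a `C^k`
function with nonvanishing differential. -/
def HasCkBoundary (k : ℕ) (Ω : Set (Euc n)) : Prop :=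
  ∀ x ∈ frontier Ω, ∃ r : ℝ, 0 < r ∧ ∃ φ : Euc n → ℝ,
    ContDiffOn ℝ k φ (Metric.ball x r) ∧
    (∀ y ∈ Metric.ball x r, fderiv ℝ φ y ≠ 0) ∧
    Ω ∩ Metric.ball x r = {y ∈ Metric.ball x r | φ y < 0}

/-- `Ω` has a `C^{1,1}` boundary. -/
def HasC11Boundary (Ω : Set (Euc n)) : Prop :=
  ∀ x ∈ frontier Ω, ∃ r : ℝ, 0 < r ∧ ∃ φ : Euc n → ℝ, ∃ L : NNReal,
    ContDiffOn ℝ 1 φ (Metric.ball x r) ∧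
    LipschitzOnWith L (fun y => fderiv ℝ φ y) (Metric.ball x r) ∧
    (∀ y ∈ Metric.ball x r, fderiv ℝ φ y ≠ 0) ∧
    Ω ∩ Metric.ball x r = {y ∈ Metric.ball x r | φ y < 0}

/-- `ν` is the outward unit normal vector field on `∂Ω`. -/
def IsOutwardUnitNormal (Ω : Set (Euc n)) (ν : Euc n → Euc n) : Prop :=
  ∀ x ∈ frontier Ω, ‖ν x‖ = 1 ∧
    ∀ᶠ s in nhdsWithin (0 : ℝ) (Ioi 0), x - s • ν x ∈ Ω ∧ x + s • ν x ∉ closure Ω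

/-- The Robin boundary condition `κ ∂_ν w + κ_s w = g` on `∂Ω`. -/
def RobinBC (Ω : Set (Euc n)) (ν : Euc n → Euc n) (κ κs : Euc n → ℝ)
    (w g : Euc n → ℝ) : Prop :=
  ∀ x ∈ frontier Ω, κ x * normalD ν w x + κs x * w x = g x

/-- Membership in `D(A_p)`, the domain of the Robin realization of `-div(κ∇·)`. -/
def MemDom (Ω : Set (Euc n)) (ν : Euc n → Euc n) (κ κs : Euc n → ℝ) (p : ℝ)
    (w : Euc n → ℝ) : Prop :=
  MemSobolev 2 p Ω w ∧ RobinBC Ω ν κ κs w 0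

/-- The norm `‖A_p w‖_{L_p(Ω)} = ‖div(κ∇w)‖_{L_p(Ω)}` on `X¹_p(Ω) = D(A_p)`. -/
def domNorm (Ω : Set (Euc n)) (κ : Euc n → ℝ) (p : ℝ) (w : Euc n → ℝ) : ℝ :=
  lpNormOn Ω p (fun x => divKGrad κ w x)

/-- The K-functional of the couple `(L_p(Ω), X¹_p(Ω))`. -/
def KX (Ω : Set (Euc n)) (ν : Euc n → Euc n) (κ κs : Euc n → ℝ) (p : ℝ)
    (t : ℝ) (u : Euc n → ℝ) : ℝ :=
  sInf {c : ℝ | ∃ u0 u1 : Euc n → ℝ, (∀ x, u x = u0 x + u1 x) ∧ MemLpOn Ω p u0 ∧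
    MemDom Ω ν κ κs p u1 ∧ c = lpNormOn Ω p u0 + t * domNorm Ω κ p u1}

/-- The norm of the real interpolation space
`X_{p,q}(Ω) = (L_p(Ω), X¹_p(Ω))_{1-1/q,q}`. -/
def xNorm (Ω : Set (Euc n)) (ν : Euc n → Euc n) (κ κs : Euc n → ℝ) (p q : ℝ)
    (u : Euc n → ℝ) : ℝ :=
  (∫ t in Ioi (0 : ℝ), (t ^ (-(1 - 1 / q)) * KX Ω ν κ κs p t u) ^ q / t) ^ (1 / q)

/-- Membership in `X_{p,q}(Ω) = (L_p(Ω), X¹_p(Ω))_{1-1/q,q}`. -/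
def MemX (Ω : Set (Euc n)) (ν : Euc n → Euc n) (κ κs : Euc n → ℝ) (p q : ℝ)
    (u : Euc n → ℝ) : Prop :=
  MemLpOn Ω p u ∧
  IntegrableOn (fun t => (t ^ (-(1 - 1 / q)) * KX Ω ν κ κs p t u) ^ q / t) (Ioi 0)

/-- `u` solves the initial-boundary value problem (1.1):
`∂_t u - div(κ∇u) = f` in `Ω×I`, `u|_{t=0} = u₀`, `κ∂_ν u + κ_s u = g` on `∂Ω×I`. -/
def SolvesHeat (Ω : Set (Euc n)) (ν : Euc n → Euc n) (κ κs : Euc n → ℝ)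
    (I : Set ℝ) (f g : ℝ → Euc n → ℝ) (u₀ : Euc n → ℝ) (u : ℝ → Euc n → ℝ) : Prop :=
  (∀ᵐ t ∂(volume.restrict I), ∀ᵐ x ∂(volume.restrict Ω),
      timeDeriv u t x - divKGrad κ (u t) x = f t x) ∧
  (∀ x ∈ Ω, u 0 x = u₀ x) ∧
  (∀ᵐ t ∂(volume.restrict I), ∀ x ∈ frontier Ω,
      κ x * normalD ν (u t) x + κs x * u t x = g t x)

/-- `u` solves the semilinear problem (1.2):
`∂_t u - div(κ∇u) - |u|^{r-1}u = f` in `Ω×I`, with the same initial and boundary data. -/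
def SolvesSemiHeat (Ω : Set (Euc n)) (ν : Euc n → Euc n) (κ κs : Euc n → ℝ)
    (I : Set ℝ) (r : ℝ) (f g : ℝ → Euc n → ℝ) (u₀ : Euc n → ℝ)
    (u : ℝ → Euc n → ℝ) : Prop :=
  (∀ᵐ t ∂(volume.restrict I), ∀ᵐ x ∂(volume.restrict Ω),
      timeDeriv u t x - divKGrad κ (u t) x - |u t x| ^ (r - 1) * u t x = f t x) ∧
  (∀ x ∈ Ω, u 0 x = u₀ x) ∧
  (∀ᵐ t ∂(volume.restrict I), ∀ x ∈ frontier Ω,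
      κ x * normalD ν (u t) x + κs x * u t x = g t x)

/-- Almost-everywhere equality on `G × I`. -/
def AEEqOn (G : Set (Euc n)) (I : Set ℝ) (u v : ℝ → Euc n → ℝ) : Prop :=
  ∀ᵐ t ∂(volume.restrict I), ∀ᵐ x ∂(volume.restrict G), u t x = v t x

/-- Membership in `L_q(I; L_p(G))`. -/
def MemLqLp (I : Set ℝ) (q p : ℝ) (G : Set (Euc n)) (f : ℝ → Euc n → ℝ) : Prop :=
  MemLqOn I q (fun t => lpNormOn G p (f t)) ∧
  ∀ᵐ t ∂(volume.restrict I), MemLpOn G p (f t)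

/-- Membership in `L_{q,0}(ℝ₊; L_p(G))` (vanishing for `t<0`). -/
def MemLqLpZero (q p : ℝ) (G : Set (Euc n)) (f : ℝ → Euc n → ℝ) : Prop :=
  MemLqLp univ q p G f ∧ ∀ t < (0 : ℝ), ∀ x, f t x = 0

/-- Exponential weight in time: `(e^{at}u)(t,x) = e^{at} u(t,x)`. -/
def expW (a : ℝ) (u : ℝ → Euc n → ℝ) : ℝ → Euc n → ℝ :=
  fun t x => Real.exp (a * t) * u t x

/-- `Λ₁`, the first eigenvalue of `-div(κ∇·)` with zero Robin boundary condition. -/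
def firstEigen (Ω : Set (Euc n)) (ν : Euc n → Euc n) (κ κs : Euc n → ℝ) : ℝ :=
  sInf {μ : ℝ | ∃ w : Euc n → ℝ,
    (¬ ∀ᵐ x ∂(volume.restrict Ω), w x = 0) ∧ MemDom Ω ν κ κs 2 w ∧
    ∀ x ∈ Ω, -divKGrad κ w x = μ * w x}

/-- Membership in `C₀^∞(ℝ₊; L_p(G))`. -/
def MemC0InfLp (p : ℝ) (G : Set (Euc n)) (f : ℝ → Euc n → ℝ) : Prop :=
  (∀ x, ∀ k : ℕ, ContDiff ℝ k fun t => f t x) ∧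
  (∃ K : Set ℝ, IsCompact K ∧ K ⊆ Ioi 0 ∧ ∀ t ∉ K, ∀ x, f t x = 0) ∧
  (∀ t, MemLpOn G p (f t))

/-- K-functional of the couple `(L_p(G), W^k_p(G))`, used for Besov spaces. -/
def KSob (k : ℕ) (p : ℝ) (G : Set (Euc n)) (t : ℝ) (u : Euc n → ℝ) : ℝ :=
  sInf {c : ℝ | ∃ u0 u1 : Euc n → ℝ, (∀ x, u x = u0 x + u1 x) ∧ MemLpOn G p u0 ∧
    MemSobolev k p G u1 ∧ c = lpNormOn G p u0 + t * sobolevNorm k p G u1}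

/-- `⟨r⟩ = min {k ∈ ℤ : k > r}` for `r ≥ 0`. -/
def besovExp (r : ℝ) : ℕ := Nat.floor r + 1

/-- Membership in the Besov space `B^r_{p,q}(G) = (L_p(G), W^{⟨r⟩}_p(G))_{r/⟨r⟩,q}`. -/
def MemBesov (r p q : ℝ) (G : Set (Euc n)) (u : Euc n → ℝ) : Prop :=
  MemLpOn G p u ∧
  IntegrableOn
    (fun t => (t ^ (-(r / (besovExp r : ℝ))) * KSob (besovExp r) p G t u) ^ q / t) (Ioi 0)

/-- Membership in `B^r_{p,q,0}(G)`: a member of `B^r_{p,q}(ℝⁿ)` supported in `cl G`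
whose extra boundary-weighted norm is finite. -/
def MemBesov0 (r p q : ℝ) (G : Set (Euc n)) (u : Euc n → ℝ) : Prop :=
  MemBesov r p q univ u ∧ Function.support u ⊆ closure G ∧
  MemLqOn (Ioi 0) q
    (fun t => t ^ (-(r + 1 / q)) *
      lpNormOn {x ∈ G | Metric.infDist x (frontier G) < t} p u)

/-- Euclidean dot product. -/
def dotE (x ξ : Euc n) : ℝ := ∑ i, x i * ξ i

/-- The Fourier–Laplace transform `L_{(x,t)}[f](ξ,λ)`. -/
def FLtrans (f : ℝ → Euc n → ℝ) (ξ : Euc n) (l : ℂ) : ℂ :=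
  ((2 * Real.pi) ^ (-((n : ℝ) + 1) / 2) : ℝ) •
    ∫ t : ℝ, ∫ x : Euc n,
      Complex.exp (-(l * (t : ℂ)) - Complex.I * ((dotE x ξ : ℝ) : ℂ)) * ((f t x : ℝ) : ℂ)

/-- The inverse Fourier–Laplace transform `L⁻¹_{(ξ,λ₂)}[g](x,t)` (at `λ₁ = 0`). -/
def invFLtrans (g : Euc n → ℂ → ℂ) (t : ℝ) (x : Euc n) : ℂ :=
  ((2 * Real.pi) ^ (-((n : ℝ) + 1) / 2) : ℝ) •
    ∫ l2 : ℝ, ∫ ξ : Euc n,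
      Complex.exp (Complex.I * (l2 : ℂ) * (t : ℂ) + Complex.I * ((dotE x ξ : ℝ) : ℂ)) *
        g ξ (Complex.I * (l2 : ℂ))

/-- The index of the last coordinate. -/
def lastIdx (m : ℕ) (hm : 0 < m) : Fin m := ⟨m - 1, Nat.sub_lt hm Nat.one_pos⟩

/-- The upper half space `ℝⁿ₊ = {x : x_n > 0}`. -/
def upperHalf (m : ℕ) (hm : 0 < m) : Set (Euc m) := {x | 0 < x (lastIdx m hm)}

/-- The `n`-dimensional inverse Fourier transform of a Banach-space-valued function. -/
def invFourierN {X : Type*} [NormedAddCommGroup X] [NormedSpace ℂ X]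
    (g : Euc n → X) (x : Euc n) : X :=
  ((2 * Real.pi) ^ (-(n : ℝ) / 2) : ℝ) •
    ∫ ξ : Euc n, Complex.exp (Complex.I * ((dotE x ξ : ℝ) : ℂ)) • g ξ

/-- The Rademacher functions `r_j(t) = sign (sin (2^j π t))`. -/
def rademacher (j : ℕ) (t : ℝ) : ℝ := Real.sign (Real.sin (2 ^ j * Real.pi * t))

/-- Convolution operator with kernel `P(·,t)`. -/
def convK (P : Euc n → ℝ → ℝ) (t : ℝ) (f : Euc n → ℝ) (x : Euc n) : ℝ :=
  ∫ y : Euc n, P (x - y) t * f y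

/-- `A(ξ',λ)^s = (|ξ'|² + κ⁻¹(λ+1))^{s/2}` (principal branch). -/
def Apow (κ s : ℝ) (ξ : Euc n) (l : ℂ) : ℂ :=
  (((‖ξ‖ ^ 2 : ℝ) : ℂ) + ((κ⁻¹ : ℝ) : ℂ) * (l + 1)) ^ ((s / 2 : ℝ) : ℂ)

/-!
`A(ξ', λ)^s` is quasi-homogeneous: replacing `(ξ', λ + 1)` by `(t ξ', t² (λ + 1))` multiplies it
by `t^s`. Rescaling by `ρ = (|ξ'|² + |λ + 1|)^{1/2}`, which is comparable to
`|ξ'| + |λ|^{1/2} + 1` when `λ₁ ≥ 0`, moves `(ξ', λ + 1)` onto the compact set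
`{(η, w) : |η|² + |w| = 1, Re w ≥ 0}`, on which `|η|² + κ⁻¹ w` stays off the branch cut of the
principal power. There the `η`-derivatives of `A^s` are bounded and `Re A` is bounded below, and
every `ξ'`-derivative of the rescaled function costs a factor `ρ⁻¹`; this gives (i) and
`Re A ≥ c ρ`. Estimate (ii) is the same homogeneity argument on the unit sphere. For (iii),
Faà di Bruno's formula combines (i) for `s = 1` with `Re A ≥ c ρ`, and half of the exponential
decay absorbs the resulting factor `(1 + x_n ρ)^k`.
-/

section IteratedFDeriv

variable {𝕜 E E' V : Type*} [NontriviallyNormedField 𝕜]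
  [NormedAddCommGroup E] [NormedSpace 𝕜 E] [NormedAddCommGroup E'] [NormedSpace 𝕜 E']
  [NormedAddCommGroup V] [NormedSpace 𝕜 V]

theorem norm_iteratedFDeriv_smul_comp_smul_le (f : E → V) (a : 𝕜) {c : 𝕜} (hc : c ≠ 0)
    (k : ℕ) (x : E) :
    ‖iteratedFDeriv 𝕜 k (fun y => a • f (c • y)) x‖ ≤
      ‖a‖ * ‖c‖ ^ k * ‖iteratedFDeriv 𝕜 k f (c • x)‖ := by
  rcases eq_or_ne a 0 with rfl | ha
  · simp
  let Lc : E ≃L[𝕜] E := ContinuousLinearEquiv.smulLeft (Units.mk0 c hc)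
  let La : V ≃L[𝕜] V := ContinuousLinearEquiv.smulLeft (Units.mk0 a ha)
  have hfun : (fun y => a • f (c • y)) = La ∘ (f ∘ Lc) := rfl
  have hLc : ‖(Lc : E →L[𝕜] E)‖ ≤ ‖c‖ :=
    ContinuousLinearMap.opNorm_le_bound _ (norm_nonneg c) fun y => (norm_smul c y).le
  have hLa : ‖(La : V →L[𝕜] V)‖ ≤ ‖a‖ :=
    ContinuousLinearMap.opNorm_le_bound _ (norm_nonneg a) fun y => (norm_smul a y).le
  rw [hfun, La.iteratedFDeriv_comp_left, ← iteratedFDerivWithin_univ, ← preimage_univ (f := Lc),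
    Lc.iteratedFDerivWithin_comp_right f uniqueDiffOn_univ (mem_univ _), iteratedFDerivWithin_univ]
  calc _ ≤ ‖(La : V →L[𝕜] V)‖ * (‖iteratedFDeriv 𝕜 k f (c • x)‖ * ∏ _ : Fin k, ‖(Lc : E →L[𝕜] E)‖) :=
        (ContinuousLinearMap.norm_compContinuousMultilinearMap_le _ _).trans
          (by gcongr; exact ContinuousMultilinearMap.norm_compContinuousLinearMap_le _ _)
    _ ≤ ‖a‖ * (‖iteratedFDeriv 𝕜 k f (c • x)‖ * ‖c‖ ^ k) := by
        rw [Finset.prod_const, Finset.card_univ, Fintype.card_fin]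
        gcongr
    _ = _ := by ring

theorem IsCompact.exists_bound_norm_iteratedFDeriv {f : E → V} {K U : Set E} {k : ℕ}
    (hK : IsCompact K) (hU : IsOpen U) (hKU : K ⊆ U) (hf : ContDiffOn 𝕜 k f U) :
    ∃ C > 0, ∀ x ∈ K, ‖iteratedFDeriv 𝕜 k f x‖ ≤ C := by
  obtain ⟨C, hC⟩ := hK.exists_bound_of_continuousOn
    ((hf.continuousOn_iteratedFDerivWithin le_rfl hU.uniqueDiffOn).mono hKU)
  refine ⟨max C 1, by positivity, fun x hx => ?_⟩
  rw [← iteratedFDerivWithin_of_isOpen k hU (hKU hx)]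
  exact (hC x hx).trans (le_max_left _ _)

theorem norm_iteratedFDeriv_comp_prodMk_le {Φ : E × E' → V} {U : Set (E × E')} {k : ℕ}
    (hU : IsOpen U) (hΦ : ContDiffOn 𝕜 k Φ U) {x : E} {y : E'} (hxy : (x, y) ∈ U) :
    ‖iteratedFDeriv 𝕜 k (fun x' => Φ (x', y)) x‖ ≤ ‖iteratedFDeriv 𝕜 k Φ (x, y)‖ := by
  set shift : E × E' → E × E' := fun p => p + (0, y)
  set U' := shift ⁻¹' U
  have hU' : IsOpen U' := hU.preimage (continuous_id.add continuous_const)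
  have hΨ : ContDiffOn 𝕜 k (Φ ∘ shift) U' :=
    hΦ.comp (contDiff_id.add contDiff_const).contDiffOn (mapsTo_preimage _ _)
  set inl := ContinuousLinearMap.inl 𝕜 E E'
  have hV : IsOpen (inl ⁻¹' U') := hU'.preimage inl.continuous
  have hx : inl x ∈ U' := by simpa [U', shift, inl] using hxy
  have hslice : (fun x' => Φ (x', y)) = (Φ ∘ shift) ∘ inl := by
    ext x'; simp [shift, inl]
  rw [hslice, ← iteratedFDerivWithin_of_isOpen k hV hx,
    inl.iteratedFDerivWithin_comp_right hΨ hU'.uniqueDiffOn hV.uniqueDiffOn hx le_rfl,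
    iteratedFDerivWithin_of_isOpen k hU' hx]
  calc _ ≤ ‖iteratedFDeriv 𝕜 k (Φ ∘ shift) (inl x)‖ * ∏ _ : Fin k, ‖inl‖ :=
        ContinuousMultilinearMap.norm_compContinuousLinearMap_le _ _
    _ ≤ ‖iteratedFDeriv 𝕜 k (Φ ∘ shift) (inl x)‖ := by
        refine mul_le_of_le_one_right (norm_nonneg _) ?_
        exact Finset.prod_le_one (fun _ _ => norm_nonneg _)
          (fun _ _ => ContinuousLinearMap.norm_inl_le_one 𝕜 E E')
    _ = _ := by
        simp only [Function.comp_def, shift, iteratedFDeriv_comp_add_right]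
        simp [inl]

end IteratedFDeriv

open Nat in
theorem one_add_pow_mul_exp_neg_le {δ u : ℝ} (hδ : 0 < δ) (hu : -1 ≤ u) (k : ℕ) :
    (1 + u) ^ k * Real.exp (-δ * u) ≤ k ! * Real.exp δ / δ ^ k := by
  have h := Real.pow_div_factorial_le_exp (x := δ * (1 + u)) (by nlinarith) k
  rw [div_le_iff₀ (by positivity), mul_pow, mul_add, mul_one, Real.exp_add] at h
  rw [le_div_iff₀ (by positivity)]
  calc (1 + u) ^ k * Real.exp (-δ * u) * δ ^ k
      = δ ^ k * (1 + u) ^ k * Real.exp (-(δ * u)) := by ring_nf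
    _ ≤ Real.exp δ * Real.exp (δ * u) * k ! * Real.exp (-(δ * u)) := by gcongr
    _ = k ! * Real.exp δ := by
        have : Real.exp (δ * u) * Real.exp (-(δ * u)) = 1 := by rw [← Real.exp_add]; simp
        linear_combination (Real.exp δ * k !) * this

theorem Real.rpow_le_rpow_abs_mul_rpow {a b c : ℝ} (ha : 0 < a) (hab : a ≤ b) (hc : 1 ≤ c)
    (hba : b ≤ c * a) (t : ℝ) : a ^ t ≤ c ^ |t| * b ^ t := by
  rcases le_or_gt 0 t with ht | ht
  · calc a ^ t ≤ b ^ t := Real.rpow_le_rpow ha.le hab ht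
      _ ≤ c ^ |t| * b ^ t :=
          le_mul_of_one_le_left (Real.rpow_nonneg (ha.le.trans hab) t)
            (Real.one_le_rpow hc (abs_nonneg t))
  · have hb : 0 < b := ha.trans_le hab
    calc a ^ t ≤ (b / c) ^ t :=
          Real.rpow_le_rpow_of_nonpos (div_pos hb (by linarith))
            (by rwa [div_le_iff₀' (by positivity)]) ht.le
      _ = c ^ |t| * b ^ t := by
          rw [Real.div_rpow hb.le (by linarith), abs_of_neg ht, Real.rpow_neg (by linarith)]
          ring

theorem Complex.ofReal_mul_cpow {a : ℝ} (ha : 0 < a) (z w : ℂ) :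
    ((a : ℂ) * z) ^ w = (a : ℂ) ^ w * z ^ w := by
  rcases eq_or_ne z 0 with rfl | hz
  · rcases eq_or_ne w 0 with rfl | hw
    · simp
    · simp [Complex.zero_cpow hw]
  have ha' : (a : ℂ) ≠ 0 := Complex.ofReal_ne_zero.2 ha.ne'
  rw [Complex.cpow_def_of_ne_zero (mul_ne_zero ha' hz), Complex.log_ofReal_mul ha hz,
    Complex.cpow_def_of_ne_zero ha', Complex.cpow_def_of_ne_zero hz, Complex.ofReal_log ha.le,
    add_mul, Complex.exp_add]

theorem Complex.re_cpow_one_half_pos {z : ℂ} (hz : z ∈ Complex.slitPlane) :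
    0 < (z ^ ((1 / 2 : ℝ) : ℂ)).re := by
  obtain ⟨harg, hz0⟩ := Complex.mem_slitPlane_iff_arg.1 hz
  rw [Complex.cpow_ofReal_re]
  have h1 := Complex.neg_pi_lt_arg z
  have h2 := (Complex.arg_le_pi z).lt_of_ne harg
  exact mul_pos (Real.rpow_pos_of_pos (norm_pos_iff.2 hz0) _)
    (Real.cos_pos_of_mem_Ioo ⟨by linarith, by linarith⟩)

theorem Complex.norm_iteratedFDeriv_real_exp (n : ℕ) (z : ℂ) :
    ‖iteratedFDeriv ℝ n Complex.exp z‖ = Real.exp z.re := by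
  rw [← (Complex.contDiff_exp (𝕜 := ℂ) (n := n)).contDiffAt.restrictScalars_iteratedFDeriv (𝕜 := ℝ),
    Function.comp_apply, ContinuousMultilinearMap.norm_restrictScalars,
    norm_iteratedFDeriv_eq_norm_iteratedDeriv, iteratedDeriv_eq_iterate, Complex.iter_deriv_exp,
    Complex.norm_exp]

open Nat in
theorem norm_iteratedFDeriv_cexp_neg_mul_le {E : Type*} [NormedAddCommGroup E] [NormedSpace ℝ E]
    {f : E → ℂ} {k : ℕ} (hf : ContDiff ℝ k f) (x : E) {t C M d : ℝ} (ht : 0 ≤ t) (hC : 1 ≤ C)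
    (hM : 0 < M) (hderiv : ∀ i, 1 ≤ i → i ≤ k → ‖iteratedFDeriv ℝ i f x‖ ≤ C * M ^ (1 - (i : ℝ)))
    (hre : d * M ≤ (f x).re) :
    ‖iteratedFDeriv ℝ k (fun y => Complex.exp (-(f y) * t)) x‖ ≤
      k ! * C ^ k * (1 + t * M) ^ k * M⁻¹ ^ k * Real.exp (-(d * M * t)) := by
  set g : E → ℂ := fun y => -(f y) * t
  have hg : g = (-t) • f := by ext y; simp [g, Complex.real_smul, mul_comm]
  have hexp : ∀ i ≤ k, ‖iteratedFDeriv ℝ i Complex.exp (g x)‖ ≤ Real.exp (-(d * M * t)) := by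
    intro i _
    rw [Complex.norm_iteratedFDeriv_real_exp, Real.exp_le_exp]
    simp only [g, Complex.mul_re, Complex.neg_re, Complex.neg_im, Complex.ofReal_re,
      Complex.ofReal_im, mul_zero, sub_zero]
    nlinarith
  have hinner : ∀ i, 1 ≤ i → i ≤ k → ‖iteratedFDeriv ℝ i g x‖ ≤ (C * (1 + t * M) * M⁻¹) ^ i := by
    intro i hi hik
    rw [hg, iteratedFDeriv_const_smul_apply (hf.contDiffAt.of_le (by exact_mod_cast hik)),
      norm_smul, norm_neg, Real.norm_of_nonneg ht]
    have hpow : t * M ≤ (1 + t * M) ^ i :=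
      (le_add_of_nonneg_left zero_le_one).trans (le_self_pow₀ (by nlinarith) (by omega))
    calc t * ‖iteratedFDeriv ℝ i f x‖ ≤ t * (C * M ^ (1 - (i : ℝ))) := by
          gcongr; exact hderiv i hi hik
      _ = C * (t * M) * M⁻¹ ^ i := by
          rw [Real.rpow_sub hM, Real.rpow_one, Real.rpow_natCast, div_eq_mul_inv, inv_pow]; ring
      _ ≤ C ^ i * (1 + t * M) ^ i * M⁻¹ ^ i := by
          gcongr
          · exact le_self_pow₀ hC (by omega)
      _ = (C * (1 + t * M) * M⁻¹) ^ i := by rw [mul_pow, mul_pow]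
  calc _ = ‖iteratedFDeriv ℝ k (Complex.exp ∘ g) x‖ := rfl
    _ ≤ k ! * Real.exp (-(d * M * t)) * (C * (1 + t * M) * M⁻¹) ^ k :=
        norm_iteratedFDeriv_comp_le (Complex.contDiff_exp (𝕜 := ℝ))
          (hg ▸ hf.const_smul (-t)) le_rfl x hexp hinner
    _ = _ := by rw [mul_pow, mul_pow]; ring

theorem exists_norm_iteratedFDeriv_norm_rpow_le {E : Type*} [NormedAddCommGroup E]
    [InnerProductSpace ℝ E] [ProperSpace E] (s : ℝ) (k : ℕ) :
    ∃ C > 0, ∀ ξ : E, ξ ≠ 0 →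
      ‖iteratedFDeriv ℝ k (fun η : E => ‖η‖ ^ s) ξ‖ ≤ C * ‖ξ‖ ^ (s - k) := by
  have hsmooth : ContDiffOn ℝ k (fun η : E => ‖η‖ ^ s) {0}ᶜ := fun η hη =>
    ((Real.contDiffAt_rpow_const_of_ne (norm_ne_zero_iff.2 hη)).comp η
      (contDiffAt_norm ℝ hη)).contDiffWithinAt
  obtain ⟨C, hC, hbound⟩ := (isCompact_sphere (0 : E) 1).exists_bound_norm_iteratedFDeriv
    isOpen_compl_singleton (fun η hη => ne_zero_of_mem_unit_sphere ⟨η, hη⟩) hsmooth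
  refine ⟨C, hC, fun ξ hξ => ?_⟩
  have hr : 0 < ‖ξ‖ := norm_pos_iff.2 hξ
  have hhom : (fun η : E => ‖η‖ ^ s) = fun η => ‖ξ‖ ^ s • ‖‖ξ‖⁻¹ • η‖ ^ s := by
    ext η
    rw [smul_eq_mul, norm_smul, norm_inv, norm_norm, Real.mul_rpow (by positivity) (norm_nonneg _),
      ← mul_assoc, ← Real.mul_rpow hr.le (by positivity), mul_inv_cancel₀ hr.ne', Real.one_rpow,
      one_mul]
  rw [hhom]
  calc _ ≤ ‖‖ξ‖ ^ s‖ * ‖‖ξ‖⁻¹‖ ^ k * ‖iteratedFDeriv ℝ k (fun η : E => ‖η‖ ^ s) (‖ξ‖⁻¹ • ξ)‖ :=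
        norm_iteratedFDeriv_smul_comp_smul_le _ _ (inv_ne_zero hr.ne') k ξ
    _ ≤ ‖ξ‖ ^ s * ‖ξ‖⁻¹ ^ k * C := by
        rw [Real.norm_of_nonneg (by positivity), norm_inv, norm_norm]
        gcongr
        refine hbound _ ?_
        rw [mem_sphere_zero_iff_norm, norm_smul, norm_inv, norm_norm, inv_mul_cancel₀ hr.ne']
    _ = C * ‖ξ‖ ^ (s - k) := by
        rw [Real.rpow_sub hr, Real.rpow_natCast, div_eq_mul_inv, inv_pow]; ring

section RootSymbol

open Complex

variable {E : Type*} [NormedAddCommGroup E]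

def rootBase (κ : ℝ) (p : E × ℂ) : ℂ := ((‖p.1‖ ^ 2 : ℝ) : ℂ) + ((κ⁻¹ : ℝ) : ℂ) * p.2

/-- `rootSymbol κ (s / 2) (ξ', λ + 1) = A(ξ', λ)^s`: the second coordinate is `λ + 1`. -/
def rootSymbol (κ c : ℝ) (p : E × ℂ) : ℂ := rootBase κ p ^ (c : ℂ)

def quasiNorm (p : E × ℂ) : ℝ := √(‖p.1‖ ^ 2 + ‖p.2‖)

def quasiUnitSphere (E : Type*) [NormedAddCommGroup E] : Set (E × ℂ) :=
  {p | ‖p.1‖ ^ 2 + ‖p.2‖ = 1 ∧ 0 ≤ p.2.re}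

theorem rootBase_re (κ : ℝ) (p : E × ℂ) : (rootBase κ p).re = ‖p.1‖ ^ 2 + κ⁻¹ * p.2.re := by
  rw [rootBase, add_re, ofReal_re, re_ofReal_mul]

theorem rootBase_im (κ : ℝ) (p : E × ℂ) : (rootBase κ p).im = κ⁻¹ * p.2.im := by
  rw [rootBase, add_im, ofReal_im, im_ofReal_mul, zero_add]

theorem rootBase_mem_slitPlane {κ : ℝ} (hκ : 0 < κ) {p : E × ℂ} (hre : 0 ≤ p.2.re)
    (hp : p ≠ 0) : rootBase κ p ∈ slitPlane := by
  have hκ' : 0 < κ⁻¹ := inv_pos.2 hκ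
  rw [mem_slitPlane_iff, rootBase_re, rootBase_im]
  by_contra! h
  obtain ⟨hre', him⟩ := h
  have h1 : ‖p.1‖ ^ 2 = 0 := by nlinarith [sq_nonneg ‖p.1‖, mul_nonneg hκ'.le hre]
  have h2 : p.2.re = 0 := by nlinarith [mul_nonneg hκ'.le hre]
  have h3 : p.2.im = 0 := (mul_eq_zero.1 him).resolve_left hκ'.ne'
  exact hp (Prod.ext (by simpa using h1) (Complex.ext h2 h3))

theorem quasiUnitSphere_subset_preimage_slitPlane {κ : ℝ} (hκ : 0 < κ) :
    quasiUnitSphere E ⊆ rootBase κ ⁻¹' slitPlane := by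
  rintro p ⟨hsum, hre⟩
  refine rootBase_mem_slitPlane hκ hre fun hp => ?_
  simp [hp] at hsum

theorem isCompact_quasiUnitSphere [ProperSpace E] : IsCompact (quasiUnitSphere E) := by
  have hclosed : IsClosed (quasiUnitSphere E) :=
    (isClosed_eq ((continuous_fst.norm.pow 2).add continuous_snd.norm) continuous_const).inter
      (isClosed_le continuous_const (Complex.continuous_re.comp continuous_snd))
  refine (isCompact_closedBall (0 : E × ℂ) 1).of_isClosed_subset hclosed ?_
  rintro ⟨η, w⟩ ⟨hsum, -⟩
  have hη : ‖η‖ ≤ 1 := by nlinarith [norm_nonneg w, norm_nonneg η]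
  have hw : ‖w‖ ≤ 1 := by nlinarith [norm_nonneg η]
  simpa [Prod.norm_def] using And.intro hη hw

theorem quasiNorm_sq (p : E × ℂ) : quasiNorm p ^ 2 = ‖p.1‖ ^ 2 + ‖p.2‖ :=
  Real.sq_sqrt (by positivity)

section Smul

variable [NormedSpace ℝ E]

theorem rootBase_smul (κ : ℝ) {t : ℝ} (η : E) (w : ℂ) :
    rootBase κ (t • η, t ^ 2 • w) = ((t ^ 2 : ℝ) : ℂ) * rootBase κ (η, w) := by
  simp only [rootBase, norm_smul, Real.norm_eq_abs, mul_pow, sq_abs, Complex.real_smul]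
  push_cast
  ring

theorem rootSymbol_smul (κ c : ℝ) {t : ℝ} (ht : 0 < t) (η : E) (w : ℂ) :
    rootSymbol κ c (t • η, t ^ 2 • w) = t ^ (2 * c) • rootSymbol κ c (η, w) := by
  rw [rootSymbol, rootBase_smul, ofReal_mul_cpow (by positivity), ← ofReal_cpow (by positivity),
    Real.rpow_mul ht.le, Real.rpow_two, Complex.real_smul, rootSymbol]

theorem smul_mem_quasiUnitSphere {p : E × ℂ} (hre : 0 ≤ p.2.re) (hp : 0 < quasiNorm p) :
    ((quasiNorm p)⁻¹ • p.1, (quasiNorm p)⁻¹ ^ 2 • p.2) ∈ quasiUnitSphere E := by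
  refine ⟨?_, ?_⟩
  · simp only [norm_smul, norm_inv, norm_pow, Real.norm_of_nonneg hp.le, inv_pow]
    rw [mul_pow, inv_pow, ← mul_add, ← quasiNorm_sq, inv_mul_cancel₀ (by positivity)]
  · rw [Complex.smul_re, smul_eq_mul]
    positivity

end Smul

section InnerProduct

variable [InnerProductSpace ℝ E]

theorem contDiff_rootBase (κ : ℝ) {n : WithTop ℕ∞} : ContDiff ℝ n (rootBase κ : E × ℂ → ℂ) :=
  (ofRealCLM.contDiff.comp ((contDiff_norm_sq ℝ).comp contDiff_fst)).add
    (contDiff_const.mul contDiff_snd)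

theorem contDiffOn_rootSymbol (κ c : ℝ) {n : WithTop ℕ∞} :
    ContDiffOn ℝ n (rootSymbol κ c : E × ℂ → ℂ) (rootBase κ ⁻¹' slitPlane) := fun p hp =>
  (((analyticAt_id.cpow analyticAt_const hp).contDiffAt.restrict_scalars ℝ).comp p
    (contDiff_rootBase κ).contDiffAt).contDiffWithinAt

theorem contDiff_rootSymbol_slice {κ : ℝ} (hκ : 0 < κ) (c : ℝ) {w : ℂ} (hw : 0 < w.re)
    {n : WithTop ℕ∞} : ContDiff ℝ n (fun η : E => rootSymbol κ c (η, w)) := by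
  refine contDiff_iff_contDiffAt.2 fun η => ?_
  have hw₀ : (η, w) ≠ 0 := fun h => hw.ne' (by rw [show w = 0 from congrArg Prod.snd h, zero_re])
  have hmem : rootBase κ (η, w) ∈ slitPlane := rootBase_mem_slitPlane hκ hw.le hw₀
  exact ((contDiffOn_rootSymbol κ c).contDiffAt
    ((isOpen_slitPlane.preimage (contDiff_rootBase κ (n := 0)).continuous).mem_nhds hmem)).comp η
    (contDiff_id.prodMk contDiff_const).contDiffAt

variable [ProperSpace E]

theorem exists_bound_norm_iteratedFDeriv_rootSymbol_slice {κ : ℝ} (hκ : 0 < κ) (c : ℝ) (k : ℕ) :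
    ∃ C > 0, ∀ p ∈ quasiUnitSphere E,
      ‖iteratedFDeriv ℝ k (fun η => rootSymbol κ c (η, p.2)) p.1‖ ≤ C := by
  have hU : IsOpen (rootBase κ ⁻¹' slitPlane : Set (E × ℂ)) :=
    isOpen_slitPlane.preimage (contDiff_rootBase κ (n := 0)).continuous
  have hsub := quasiUnitSphere_subset_preimage_slitPlane (E := E) hκ
  obtain ⟨C, hC, hbound⟩ :=
    isCompact_quasiUnitSphere.exists_bound_norm_iteratedFDeriv hU hsub (contDiffOn_rootSymbol κ c)
  exact ⟨C, hC, fun p hp =>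
    (norm_iteratedFDeriv_comp_prodMk_le hU (contDiffOn_rootSymbol κ c) (hsub hp)).trans
      (hbound p hp)⟩

theorem exists_le_re_rootSymbol_one_half {κ : ℝ} (hκ : 0 < κ) :
    ∃ d > 0, ∀ p ∈ quasiUnitSphere E, d ≤ (rootSymbol κ (1 / 2) p).re := by
  have hsub := quasiUnitSphere_subset_preimage_slitPlane (E := E) hκ
  exact isCompact_quasiUnitSphere.exists_forall_le'
    (continuous_re.comp_continuousOn ((contDiffOn_rootSymbol κ _ (n := 0)).continuousOn.mono hsub))
    fun p hp => re_cpow_one_half_pos (hsub hp)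

end InnerProduct

end RootSymbol

section Apow

variable {m : ℕ}

theorem Apow_eq_rpow_smul_rootSymbol (κ s : ℝ) {ρ : ℝ} (hρ : 0 < ρ) (ξ : Euc m) (l : ℂ) :
    Apow κ s ξ l = ρ ^ s • rootSymbol κ (s / 2) (ρ⁻¹ • ξ, ρ⁻¹ ^ 2 • (l + 1)) := by
  rw [rootSymbol_smul κ _ (inv_pos.2 hρ), smul_smul, Real.inv_rpow hρ.le,
    show 2 * (s / 2) = s by ring, mul_inv_cancel₀ (Real.rpow_pos_of_pos hρ s).ne', one_smul]
  rfl

theorem one_le_quasiNorm (ξ : Euc m) {l : ℂ} (hl : 0 ≤ l.re) : 1 ≤ quasiNorm (ξ, l + 1) := by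
  have : 1 ≤ ‖l + 1‖ := by simpa using (Complex.re_le_norm (l + 1)).trans' (by simp; linarith)
  exact Real.one_le_sqrt.2 (by simp only; nlinarith [sq_nonneg ‖ξ‖])

theorem quasiNorm_le (ξ : Euc m) (l : ℂ) :
    quasiNorm (ξ, l + 1) ≤ ‖ξ‖ + ‖l‖ ^ ((1 : ℝ) / 2) + 1 := by
  rw [← Real.sqrt_eq_rpow, quasiNorm, Real.sqrt_le_iff]
  refine ⟨by positivity, ?_⟩
  have h1 : ‖l + 1‖ ≤ ‖l‖ + 1 := by simpa using norm_add_le l 1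
  have h2 : ‖l‖ = √‖l‖ ^ 2 := (Real.sq_sqrt (norm_nonneg l)).symm
  simp only
  nlinarith [norm_nonneg ξ, Real.sqrt_nonneg ‖l‖]

theorem le_four_mul_quasiNorm (ξ : Euc m) {l : ℂ} (hl : 0 ≤ l.re) :
    ‖ξ‖ + ‖l‖ ^ ((1 : ℝ) / 2) + 1 ≤ 4 * quasiNorm (ξ, l + 1) := by
  have hρ := one_le_quasiNorm ξ hl
  have hsq := quasiNorm_sq (ξ, l + 1)
  have h1 : ‖l‖ ≤ ‖l + 1‖ + 1 := by simpa using norm_sub_le (l + 1) 1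
  have hξ : ‖ξ‖ ≤ quasiNorm (ξ, l + 1) := by
    simp only at hsq; nlinarith [norm_nonneg ξ, norm_nonneg (l + 1)]
  have hl' : √‖l‖ ≤ 2 * quasiNorm (ξ, l + 1) := by
    rw [Real.sqrt_le_iff]
    refine ⟨by positivity, ?_⟩
    simp only at hsq; nlinarith [sq_nonneg ‖ξ‖]
  rw [← Real.sqrt_eq_rpow]
  linarith

variable {κ : ℝ}

theorem exists_norm_iteratedFDeriv_Apow_le (hκ : 0 < κ) (s : ℝ) (k : ℕ) :
    ∃ C > 0, ∀ (ξ : Euc m) (l : ℂ), 0 ≤ l.re →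
      ‖iteratedFDeriv ℝ k (fun η => Apow κ s η l) ξ‖ ≤
        C * (‖ξ‖ + ‖l‖ ^ ((1 : ℝ) / 2) + 1) ^ (s - k) := by
  obtain ⟨C, hC, hbound⟩ :=
    exists_bound_norm_iteratedFDeriv_rootSymbol_slice (E := Euc m) hκ (s / 2) k
  refine ⟨4 ^ |s - k| * C, by positivity, fun ξ l hl => ?_⟩
  set ρ := quasiNorm (ξ, l + 1)
  have hρ : 1 ≤ ρ := one_le_quasiNorm ξ hl
  have hρ₀ : 0 < ρ := by linarith
  have hsphere : (ρ⁻¹ • ξ, ρ⁻¹ ^ 2 • (l + 1)) ∈ quasiUnitSphere (Euc m) :=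
    smul_mem_quasiUnitSphere (p := (ξ, l + 1)) (by simp; linarith) hρ₀
  have hrescale : (fun η : Euc m => Apow κ s η l) =
      fun η => ρ ^ s • rootSymbol κ (s / 2) (ρ⁻¹ • η, ρ⁻¹ ^ 2 • (l + 1)) :=
    funext fun η => Apow_eq_rpow_smul_rootSymbol κ s hρ₀ η l
  rw [hrescale]
  calc _ ≤ ‖ρ ^ s‖ * ‖ρ⁻¹‖ ^ k *
        ‖iteratedFDeriv ℝ k (fun η => rootSymbol κ (s / 2) (η, ρ⁻¹ ^ 2 • (l + 1))) (ρ⁻¹ • ξ)‖ :=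
        norm_iteratedFDeriv_smul_comp_smul_le (fun η => rootSymbol κ (s / 2) (η, _)) _
          (inv_ne_zero hρ₀.ne') k ξ
    _ ≤ ρ ^ s * ρ⁻¹ ^ k * C := by
        rw [Real.norm_of_nonneg (by positivity), Real.norm_of_nonneg (by positivity)]
        gcongr
        exact hbound (ρ⁻¹ • ξ, ρ⁻¹ ^ 2 • (l + 1)) hsphere
    _ = C * ρ ^ (s - k) := by
        rw [Real.rpow_sub hρ₀, Real.rpow_natCast, div_eq_mul_inv, inv_pow]; ring
    _ ≤ C * (4 ^ |s - k| * (‖ξ‖ + ‖l‖ ^ ((1 : ℝ) / 2) + 1) ^ (s - k)) := by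
        gcongr
        exact Real.rpow_le_rpow_abs_mul_rpow hρ₀ (quasiNorm_le ξ l) (by norm_num)
          (le_four_mul_quasiNorm ξ hl) _
    _ = _ := by ring

theorem exists_mul_le_re_Apow_one (hκ : 0 < κ) :
    ∃ d > 0, ∀ (ξ : Euc m) (l : ℂ), 0 ≤ l.re →
      d * (‖ξ‖ + ‖l‖ ^ ((1 : ℝ) / 2) + 1) ≤ (Apow κ 1 ξ l).re := by
  obtain ⟨d, hd, hbound⟩ := exists_le_re_rootSymbol_one_half (E := Euc m) hκ
  refine ⟨d / 4, by positivity, fun ξ l hl => ?_⟩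
  set ρ := quasiNorm (ξ, l + 1)
  have hρ₀ : 0 < ρ := by linarith [one_le_quasiNorm ξ hl]
  have hsphere : (ρ⁻¹ • ξ, ρ⁻¹ ^ 2 • (l + 1)) ∈ quasiUnitSphere (Euc m) :=
    smul_mem_quasiUnitSphere (p := (ξ, l + 1)) (by simp; linarith) hρ₀
  rw [Apow_eq_rpow_smul_rootSymbol κ 1 hρ₀, Real.rpow_one, Complex.smul_re, smul_eq_mul]
  calc d / 4 * (‖ξ‖ + ‖l‖ ^ ((1 : ℝ) / 2) + 1) ≤ d / 4 * (4 * ρ) := by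
        gcongr; exact le_four_mul_quasiNorm ξ hl
    _ = ρ * d := by ring
    _ ≤ _ := by gcongr; exact hbound (ρ⁻¹ • ξ, ρ⁻¹ ^ 2 • (l + 1)) hsphere

open Nat in
theorem exists_norm_iteratedFDeriv_cexp_neg_Apow_mul_le (hκ : 0 < κ) :
    ∃ d > 0, ∀ k : ℕ, ∃ C > 0, ∀ (ξ : Euc m) (l : ℂ), 0 ≤ l.re → ∀ xn : ℝ, 0 ≤ xn →
      ‖iteratedFDeriv ℝ k (fun η => Complex.exp (-(Apow κ 1 η l) * (xn : ℂ))) ξ‖ ≤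
        C * (‖ξ‖ + ‖l‖ ^ ((1 : ℝ) / 2) + 1) ^ (-(k : ℝ)) *
          Real.exp (-d * (‖ξ‖ + ‖l‖ ^ ((1 : ℝ) / 2) + 1) * xn) := by
  obtain ⟨d, hd, hre⟩ := exists_mul_le_re_Apow_one (m := m) hκ
  refine ⟨d / 2, by positivity, fun k => ?_⟩
  have hderiv : ∀ᶠ C in atTop, ∀ i ∈ Finset.range (k + 1), ∀ (ξ : Euc m) (l : ℂ), 0 ≤ l.re →
      ‖iteratedFDeriv ℝ i (fun η => Apow κ 1 η l) ξ‖ ≤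
        C * (‖ξ‖ + ‖l‖ ^ ((1 : ℝ) / 2) + 1) ^ (1 - (i : ℝ)) := by
    refine (Filter.eventually_all_finset _).2 fun i _ => ?_
    obtain ⟨C, -, hC⟩ := exists_norm_iteratedFDeriv_Apow_le (m := m) hκ 1 i
    filter_upwards [eventually_ge_atTop C] with C' hC' ξ l hl
    exact (hC ξ l hl).trans (by gcongr)
  obtain ⟨C, hC₁, hC⟩ := ((eventually_ge_atTop 1).and hderiv).exists
  refine ⟨k ! * C ^ k * (k ! * Real.exp (d / 2) / (d / 2) ^ k), by positivity,
    fun ξ l hl xn hxn => ?_⟩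
  set M := ‖ξ‖ + ‖l‖ ^ ((1 : ℝ) / 2) + 1
  have hM : 0 < M := by positivity
  have hsmooth : ContDiff ℝ k (fun η : Euc m => Apow κ 1 η l) :=
    contDiff_rootSymbol_slice hκ _ (by simp; linarith)
  have hsplit : Real.exp (-(d * M * xn)) =
      Real.exp (-(d / 2) * (xn * M)) * Real.exp (-(d / 2) * M * xn) := by
    rw [← Real.exp_add]; ring_nf
  calc _ ≤ k ! * C ^ k * (1 + xn * M) ^ k * M⁻¹ ^ k * Real.exp (-(d * M * xn)) :=
        norm_iteratedFDeriv_cexp_neg_mul_le hsmooth ξ hxn hC₁ hM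
          (fun i _ hik => hC i (Finset.mem_range_succ_iff.2 hik) ξ l hl) (hre ξ l hl)
    _ = k ! * C ^ k * M ^ (-(k : ℝ)) *
          ((1 + xn * M) ^ k * Real.exp (-(d / 2) * (xn * M))) * Real.exp (-(d / 2) * M * xn) := by
        rw [hsplit, Real.rpow_neg hM.le, Real.rpow_natCast, inv_pow]; ring
    _ ≤ k ! * C ^ k * M ^ (-(k : ℝ)) *
          (k ! * Real.exp (d / 2) / (d / 2) ^ k) * Real.exp (-(d / 2) * M * xn) := by
        gcongr
        exact one_add_pow_mul_exp_neg_le (by positivity) (by nlinarith) k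
    _ = _ := by ring

end Apow

theorem characteristic_root_symbol_estimates_general
    (m : ℕ) (κ : ℝ) (hκ : 0 < κ) :
    ∃ d : ℝ, 0 < d ∧ ∀ (s : ℝ) (k : ℕ), ∃ C : ℝ, 0 < C ∧
      ∀ ξ : Euc m, ξ ≠ 0 → ∀ l : ℂ, 0 ≤ l.re → l.im ≠ 0 → ∀ xn : ℝ, 0 ≤ xn →
        (‖iteratedFDeriv ℝ k (fun η => Apow κ s η l) ξ‖ ≤
          C * (‖ξ‖ + ‖l‖ ^ ((1 : ℝ) / 2) + 1) ^ (s - k)) ∧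
        (‖iteratedFDeriv ℝ k (fun η : Euc m => ‖η‖ ^ s) ξ‖ ≤ C * ‖ξ‖ ^ (s - k)) ∧
        (‖iteratedFDeriv ℝ k (fun η => Complex.exp (-(Apow κ 1 η l) * (xn : ℂ))) ξ‖ ≤
          C * (‖ξ‖ + ‖l‖ ^ ((1 : ℝ) / 2) + 1) ^ (-(k : ℝ)) *
            Real.exp (-d * (‖ξ‖ + ‖l‖ ^ ((1 : ℝ) / 2) + 1) * xn)) := by
  obtain ⟨d, hd, hexp⟩ := exists_norm_iteratedFDeriv_cexp_neg_Apow_mul_le (m := m) hκ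
  refine ⟨d, hd, fun s k => ?_⟩
  obtain ⟨C₁, hC₁, h₁⟩ := exists_norm_iteratedFDeriv_Apow_le (m := m) hκ s k
  obtain ⟨C₂, hC₂, h₂⟩ := exists_norm_iteratedFDeriv_norm_rpow_le (E := Euc m) s k
  obtain ⟨C₃, hC₃, h₃⟩ := hexp k
  refine ⟨C₁ + C₂ + C₃, by positivity, fun ξ hξ l hl _ xn hxn => ⟨?_, ?_, ?_⟩⟩
  · exact (h₁ ξ l hl).trans (by gcongr; linarith)
  · exact (h₂ ξ hξ).trans (by gcongr; linarith)
  · exact (h₃ ξ l hl xn hxn).trans (by gcongr; linarith)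

/-- Lemma 2.9: symbol estimates for the characteristic root
`A(ξ',λ) = (|ξ'|² + κ⁻¹(λ+1))^{1/2}`. -/
theorem characteristic_root_symbol_estimates
    (m : ℕ) (hm : 1 ≤ m) (κ : ℝ) (hκ : 0 < κ) :
    ∃ d : ℝ, 0 < d ∧ ∀ (s : ℝ) (k : ℕ), ∃ C : ℝ, 0 < C ∧
      ∀ ξ : Euc m, ξ ≠ 0 → ∀ l : ℂ, 0 ≤ l.re → l.im ≠ 0 → ∀ xn : ℝ, 0 ≤ xn →
        (‖iteratedFDeriv ℝ k (fun η => Apow κ s η l) ξ‖ ≤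
          C * (‖ξ‖ + ‖l‖ ^ ((1 : ℝ) / 2) + 1) ^ (s - k)) ∧
        (‖iteratedFDeriv ℝ k (fun η : Euc m => ‖η‖ ^ s) ξ‖ ≤ C * ‖ξ‖ ^ (s - k)) ∧
        (‖iteratedFDeriv ℝ k (fun η => Complex.exp (-(Apow κ 1 η l) * (xn : ℂ))) ξ‖ ≤
          C * (‖ξ‖ + ‖l‖ ^ ((1 : ℝ) / 2) + 1) ^ (-(k : ℝ)) *
            Real.exp (-d * (‖ξ‖ + ‖l‖ ^ ((1 : ℝ) / 2) + 1) * xn)) :=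
  characteristic_root_symbol_estimates_general m κ hκ
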